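/- arXiv:1805.06856 — 4 statements merged into one kernel-verified Lean document; each statement's English description precedes it below -/
import Mathlib

section
/- Let (P₀, Q₀) and (P₁, Q₁) be two pairs of orthogonal projections on H, each pair in generic position, with P₀ - Q₀ = P₁ - Q₁. If P₁ + Q₁ ≤ P₀ + Q₀ in the order of selfadjoint operators, then P₁ = P₀ and Q₁ = Q₀. -/
/-!
With `d = P - Q`, idempotence gives `(P + Q) d + d (P + Q) = 2 d` for each pair, so the
positive operator `t = (P₀ + Q₀) - (P₁ + Q₁)` anticommutes with `d`. A positive element
anticommuting with `d` annihilates it, since it is the square root of its square, which commutes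
with `d`. But `d` is injective: if `P₀ x = Q₀ x`, this vector lies in `ran P₀ ∩ ran Q₀ = 0`, so
`x ∈ ker P₀ ∩ ker Q₀ = 0`. Hence `t = 0`, and the sums and differences of the two pairs agree.
-/

open ContinuousLinearMap

variable {H : Type*} [NormedAddCommGroup H] [InnerProductSpace ℂ H] [CompleteSpace H]

/-- An orthogonal projection: a selfadjoint idempotent bounded operator. -/
def IsOrthogonalProjection (P : H →L[ℂ] H) : Prop :=
  IsSelfAdjoint P ∧ P * P = P

/-- A symmetry: a selfadjoint unitary operator. -/
def IsSymmetry (V : H →L[ℂ] H) : Prop :=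
  IsSelfAdjoint V ∧ V * V = 1

/-- Two orthogonal projections are in generic position if the four canonical
intersections of their ranges and kernels are trivial. -/
def GenericPosition (P Q : H →L[ℂ] H) : Prop :=
  LinearMap.range (P : H →ₗ[ℂ] H) ⊓ LinearMap.range (Q : H →ₗ[ℂ] H) = ⊥ ∧
  LinearMap.range (P : H →ₗ[ℂ] H) ⊓ LinearMap.ker (Q : H →ₗ[ℂ] H) = ⊥ ∧
  LinearMap.ker (P : H →ₗ[ℂ] H) ⊓ LinearMap.range (Q : H →ₗ[ℂ] H) = ⊥ ∧
  LinearMap.ker (P : H →ₗ[ℂ] H) ⊓ LinearMap.ker (Q : H →ₗ[ℂ] H) = ⊥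

section CStarAlgebra

variable {A : Type*} [CStarAlgebra A] [PartialOrder A] [StarOrderedRing A]

theorem Commute.of_mul_self_left {a b : A} (ha : 0 ≤ a) (h : Commute (a * a) b) :
    Commute a b := by
  have h' : Commute (CFC.sqrt (a * a)) b := h.cfcₙ_nnreal NNReal.sqrt
  rwa [CFC.sqrt_mul_self a ha] at h'

theorem mul_eq_zero_of_nonneg_of_mul_add_mul_eq_zero {a b : A} (ha : 0 ≤ a)
    (h : a * b + b * a = 0) : a * b = 0 := by
  have hanti : a * b = -(b * a) := eq_neg_of_add_eq_zero_left h
  have hsq : Commute (a * a) b := by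
    calc a * a * b = a * (a * b) := mul_assoc a a b
      _ = b * (a * a) := by rw [hanti, mul_neg, ← mul_assoc, hanti, neg_mul, neg_neg, mul_assoc]
  rw [← (Commute.of_mul_self_left ha hsq).eq, ← two_smul ℂ] at h
  exact (smul_eq_zero.mp h).resolve_left two_ne_zero

end CStarAlgebra

theorem IsIdempotentElem.add_mul_sub_add_sub_mul_add {R : Type*} [Ring R] {p q : R}
    (hp : IsIdempotentElem p) (hq : IsIdempotentElem q) :
    (p + q) * (p - q) + (p - q) * (p + q) = 2 * (p - q) := by
  have e : (p + q) * (p - q) + (p - q) * (p + q) = 2 * (p * p - q * q) := by noncomm_ring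
  rw [e, hp.eq, hq.eq]

theorem LinearMap.ker_sub_eq_bot {R M N : Type*} [Ring R] [AddCommGroup M] [Module R M]
    [AddCommGroup N] [Module R N] {p q : M →ₗ[R] N}
    (hrange : LinearMap.range p ⊓ LinearMap.range q = ⊥)
    (hker : LinearMap.ker p ⊓ LinearMap.ker q = ⊥) :
    LinearMap.ker (p - q) = ⊥ := by
  rw [LinearMap.ker_eq_bot']
  intro x hx
  have hpq : p x = q x := sub_eq_zero.mp hx
  have hpx : p x = 0 := by
    have hmem : p x ∈ LinearMap.range p ⊓ LinearMap.range q := ⟨⟨x, rfl⟩, ⟨x, hpq.symm⟩⟩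
    simpa [hrange] using hmem
  have hmem : x ∈ LinearMap.ker p ⊓ LinearMap.ker q := ⟨hpx, hpq.symm.trans hpx⟩
  simpa [hker] using hmem

theorem eq_and_eq_of_add_eq_add_of_sub_eq_sub {G : Type*} [AddCommGroup G]
    [IsAddTorsionFree G] {a b c d : G} (hadd : a + b = c + d)
    (hsub : a - b = c - d) : a = c ∧ b = d := by
  have ha : 2 • a = 2 • c := by
    calc 2 • a = (a + b) + (a - b) := by abel
      _ = 2 • c := by rw [hadd, hsub]; abel
  have hb : 2 • b = 2 • d := by
    calc 2 • b = (a + b) - (a - b) := by abel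
      _ = 2 • d := by rw [hadd, hsub]; abel
  exact ⟨nsmul_right_injective two_ne_zero ha, nsmul_right_injective two_ne_zero hb⟩

theorem generic_pairs_not_comparable_general (P₀ Q₀ P₁ Q₁ : H →L[ℂ] H)
    (hP₀ : IsOrthogonalProjection P₀) (hQ₀ : IsOrthogonalProjection Q₀)
    (hP₁ : IsOrthogonalProjection P₁) (hQ₁ : IsOrthogonalProjection Q₁)
    (hgen₀ : GenericPosition P₀ Q₀)
    (hdiff : P₀ - Q₀ = P₁ - Q₁)
    (hle : ((P₀ + Q₀) - (P₁ + Q₁)).IsPositive) :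
    P₁ = P₀ ∧ Q₁ = Q₀ := by
  set d := P₀ - Q₀
  set t := (P₀ + Q₀) - (P₁ + Q₁)
  have hanti : t * d + d * t = 0 := by
    have h₀ := IsIdempotentElem.add_mul_sub_add_sub_mul_add hP₀.2 hQ₀.2
    have h₁ := IsIdempotentElem.add_mul_sub_add_sub_mul_add hP₁.2 hQ₁.2
    rw [← hdiff] at h₁
    calc t * d + d * t
        = ((P₀ + Q₀) * d + d * (P₀ + Q₀)) - ((P₁ + Q₁) * d + d * (P₁ + Q₁)) := by
          simp only [t, sub_mul, mul_sub]; abel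
      _ = 0 := by rw [h₀, h₁, sub_self]
  have hdt : d * t = 0 := by
    have htd :=
      mul_eq_zero_of_nonneg_of_mul_add_mul_eq_zero ((nonneg_iff_isPositive t).mpr hle) hanti
    rwa [htd, zero_add] at hanti
  have hd_inj : Function.Injective d :=
    LinearMap.ker_eq_bot.mp (LinearMap.ker_sub_eq_bot hgen₀.1 hgen₀.2.2.2)
  have ht : t = 0 := by
    ext x
    exact hd_inj (by simpa using congrArg (· x) hdt)
  have : IsAddTorsionFree (H →L[ℂ] H) := .of_isTorsionFree ℂ _
  obtain ⟨hP, hQ⟩ := eq_and_eq_of_add_eq_add_of_sub_eq_sub (sub_eq_zero.mp ht) hdiff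
  exact ⟨hP.symm, hQ.symm⟩

/-- Two pairs of projections in generic position with the same difference are
not strictly comparable: if `P₁ + Q₁ ≤ P₀ + Q₀` (i.e. `(P₀ + Q₀) - (P₁ + Q₁)` is positive),
then the pairs coincide. -/
theorem generic_pairs_not_comparable (P₀ Q₀ P₁ Q₁ : H →L[ℂ] H)
    (hP₀ : IsOrthogonalProjection P₀) (hQ₀ : IsOrthogonalProjection Q₀)
    (hP₁ : IsOrthogonalProjection P₁) (hQ₁ : IsOrthogonalProjection Q₁)
    (hgen₀ : GenericPosition P₀ Q₀) (hgen₁ : GenericPosition P₁ Q₁)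
    (hdiff : P₀ - Q₀ = P₁ - Q₁)
    (hle : ((P₀ + Q₀) - (P₁ + Q₁)).IsPositive) :
    P₁ = P₀ ∧ Q₁ = Q₀ :=
  generic_pairs_not_comparable_general P₀ Q₀ P₁ Q₁ hP₀ hQ₀ hP₁ hQ₁ hgen₀ hdiff hle
end

section
/- Let (P₀, Q₀) and (P, Q) be pairs of orthogonal projections on H, both in generic position, with P₀ - Q₀ = P - Q = A. Let V₀ be the Davis symmetry of (P₀, Q₀), i.e., the symmetry commuting with P₀ + Q₀ - 1 such that V₀(P₀ + Q₀ - 1) is positive. Suppose P₀ + Q - 1 is invertible, and let Σ = (P₀ + Q - 1) · ((P₀ + Q - 1)²)^{-1/2}. Then U := Σ V₀ is a unitary operator satisfying UA = AU, U P₀ U* = P, and U Q₀ U* = Q. -/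
/-!
Write `A = P₀ - Q₀ = P - Q`, `B₀ = P₀ + Q₀ - 1`, `B₁ = P + Q - 1`, `N = P₀ + Q - 1` and
`D = P - P₀ = Q - Q₀`, so that `B₀ = N - D` and `B₁ = N + D`. Identities for idempotents show
that `A` anticommutes with `B₀` and with `N`, and that `N` anticommutes with `D`. Then `R = |N|`
commutes with everything commuting with `N²`, so `Σ = N R⁻¹` is a symmetry commuting with `N` and
anticommuting with `A` and `D`; hence `Σ B₀ Σ = B₁`. The Davis symmetry satisfies `V₀ B₀ = |B₀|`,
which commutes with `A` because `B₀²` does; as `B₀` is injective, `V₀` anticommutes with `A`.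
So `U = Σ V₀` commutes with `A` and conjugates `B₀` to `B₁`, hence `P₀ = (1 + A + B₀) / 2` to `P`
and `Q₀ = (1 - A + B₀) / 2` to `Q`.
-/

open ContinuousLinearMap

variable {H : Type*} [NormedAddCommGroup H] [InnerProductSpace ℂ H] [CompleteSpace H]

open scoped Ring

section Anticommute

variable {R : Type*} [Ring R]

def Anticommute (a b : R) : Prop := a * b + b * a = 0

namespace Anticommute

variable {a b c : R}

theorem symm (h : Anticommute a b) : Anticommute b a := by
  rwa [Anticommute, add_comm]

theorem sub_right (hb : Anticommute a b) (hc : Anticommute a c) : Anticommute a (b - c) := by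
  rw [Anticommute, mul_sub, sub_mul, sub_add_sub_comm, hb, hc, sub_zero]

theorem mul_right_of_commute (hb : Anticommute a b) (hc : Commute a c) :
    Anticommute a (b * c) := by
  rw [Anticommute, ← mul_assoc, mul_assoc b, ← hc.eq, ← mul_assoc, ← add_mul, hb, zero_mul]

theorem commute_mul (hb : Anticommute a b) (hc : Anticommute a c) : Commute a (b * c) := by
  have hb' : a * b = -(b * a) := eq_neg_of_add_eq_zero_left hb
  have hc' : a * c = -(c * a) := eq_neg_of_add_eq_zero_left hc
  calc a * (b * c) = -(b * (a * c)) := by rw [← mul_assoc, hb', neg_mul, mul_assoc]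
    _ = b * c * a := by rw [hc', mul_neg, neg_neg, mul_assoc]

theorem mul_mul_eq_neg {s x : R} (h : Anticommute s x) (hs : s * s = 1) :
    s * x * s = -x := by
  rw [eq_neg_of_add_eq_zero_left h, neg_mul, mul_assoc, hs, mul_one]

theorem of_commute_mul {v : R} (hab : Anticommute a b) (h : Commute a (v * b))
    (hb : IsRightRegular b) : Anticommute a v := by
  refine hb (?_ : (a * v + v * a) * b = 0 * b)
  rw [zero_mul, add_mul, mul_assoc, h.eq, mul_assoc v a b, eq_neg_of_add_eq_zero_left hab, mul_neg,
    ← mul_assoc, add_neg_cancel]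

end Anticommute

theorem Commute.mul_mul_eq_self {s x : R} (h : Commute s x) (hs : s * s = 1) : s * x * s = x := by
  rw [h.eq, mul_assoc, hs, mul_one]

end Anticommute

theorem Commute.ringInverse_right {M₀ : Type*} [MonoidWithZero M₀] {a b : M₀}
    (h : Commute a b) : Commute a b⁻¹ʳ := by
  by_cases hb : IsUnit b
  · obtain ⟨u, rfl⟩ := hb
    rw [Ring.inverse_unit]
    exact h.units_inv_right
  · rw [Ring.inverse_non_unit b hb]
    exact Commute.zero_right a

theorem eq_of_sub_eq_of_add_eq {G : Type*} [AddCommGroup G] [IsAddTorsionFree G] {x y x' y' : G}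
    (h₁ : x - y = x' - y') (h₂ : x + y = x' + y') : x = x' := by
  refine nsmul_right_injective two_ne_zero ?_
  calc 2 • x = (x - y) + (x + y) := by abel
    _ = 2 • x' := by rw [h₁, h₂]; abel

theorem map_eq_of_map_sub_eq_of_map_add_sub_one_eq {R S F : Type*} [Ring R] [Ring S]
    [IsAddTorsionFree S] [FunLike F R S] [RingHomClass F R S] (f : F) {p₀ q₀ : R} {p q : S}
    (h₁ : f (p₀ - q₀) = p - q) (h₂ : f (p₀ + q₀ - 1) = p + q - 1) : f p₀ = p ∧ f q₀ = q := by
  rw [map_sub] at h₁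
  rw [map_sub, map_add, map_one, sub_left_inj] at h₂
  refine ⟨eq_of_sub_eq_of_add_eq h₁ h₂, eq_of_sub_eq_of_add_eq (y := f p₀) (y' := p) ?_ ?_⟩
  · rw [← neg_sub, h₁, neg_sub]
  · rw [add_comm, h₂, add_comm]

section Idempotent

variable {R : Type*} [Ring R] {p₀ q₀ p q : R}

theorem IsIdempotentElem.mul_sub_add_sub_mul_left (hp : IsIdempotentElem p)
    (hq : IsIdempotentElem q) : p * (p - q) + (p - q) * p = (p - q) * (p - q) + (p - q) := by
  simp only [mul_sub, sub_mul, hp.eq, hq.eq]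
  abel

theorem IsIdempotentElem.mul_sub_add_sub_mul_right (hp : IsIdempotentElem p)
    (hq : IsIdempotentElem q) : q * (p - q) + (p - q) * q = (p - q) - (p - q) * (p - q) := by
  simp only [mul_sub, sub_mul, hp.eq, hq.eq]
  abel

theorem anticommute_sub_add_sub_one (hp₀ : IsIdempotentElem p₀) (hq₀ : IsIdempotentElem q₀)
    (hp : IsIdempotentElem p) (hq : IsIdempotentElem q) (h : p₀ - q₀ = p - q) :
    Anticommute (p₀ - q₀) (p₀ + q - 1) := by
  have h₀ := hp₀.mul_sub_add_sub_mul_left hq₀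
  have h₁ := hp.mul_sub_add_sub_mul_right hq
  rw [← h] at h₁
  calc (p₀ - q₀) * (p₀ + q - 1) + (p₀ + q - 1) * (p₀ - q₀)
      = (p₀ * (p₀ - q₀) + (p₀ - q₀) * p₀) + (q * (p₀ - q₀) + (p₀ - q₀) * q)
          - ((p₀ - q₀) + (p₀ - q₀)) := by noncomm_ring
    _ = 0 := by rw [h₀, h₁]; abel

theorem anticommute_add_sub_one_sub (hp₀ : IsIdempotentElem p₀) (hq₀ : IsIdempotentElem q₀)
    (hp : IsIdempotentElem p) (hq : IsIdempotentElem q) (h : p₀ - q₀ = p - q) :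
    Anticommute (p₀ + q - 1) (p - p₀) := by
  rw [show p - p₀ = (p₀ - q₀) - (p₀ - q) by rw [h]; abel]
  exact (anticommute_sub_add_sub_one hp₀ hq₀ hp hq h).symm.sub_right
    (anticommute_sub_add_sub_one hp₀ hq hp₀ hq rfl).symm

end Idempotent

theorem mul_ringInverse_mul_self {R : Type*} [Ring R] {n r : R} (hr : IsUnit r)
    (hnr : Commute n r) (h : r * r = n * n) : n * r⁻¹ʳ * (n * r⁻¹ʳ) = 1 := by
  calc n * r⁻¹ʳ * (n * r⁻¹ʳ) = n * n * (r⁻¹ʳ * r⁻¹ʳ) := by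
        rw [mul_assoc, ← mul_assoc r⁻¹ʳ, ← hnr.ringInverse_right.eq]; noncomm_ring
    _ = r * (r * r⁻¹ʳ) * r⁻¹ʳ := by rw [← h]; noncomm_ring
    _ = 1 := by rw [Ring.mul_inverse_cancel r hr, mul_one, Ring.mul_inverse_cancel r hr]

section CStarAlgebra

variable {A : Type*} [CStarAlgebra A] [PartialOrder A] [StarOrderedRing A]

theorem commute_of_mul_self_eq {r s x : A} (hr : 0 ≤ r) (hrs : r * r = s) (h : Commute s x) :
    Commute r x := by
  rw [← CFC.sqrt_unique hrs hr, CFC.sqrt_eq_cfc]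
  exact h.cfc_nnreal _

theorem Commute.mul_ringInverse_of_mul_self_eq {x n r : A} (h : Commute x n)
    (hr : 0 ≤ r) (hrn : r * r = n * n) : Commute x (n * r⁻¹ʳ) :=
  h.mul_right (commute_of_mul_self_eq hr hrn (h.mul_right h).symm).symm.ringInverse_right

theorem Anticommute.mul_ringInverse_of_mul_self_eq {x n r : A} (h : Anticommute x n)
    (hr : 0 ≤ r) (hrn : r * r = n * n) : Anticommute x (n * r⁻¹ʳ) :=
  h.mul_right_of_commute
    (commute_of_mul_self_eq hr hrn (h.commute_mul h).symm).symm.ringInverse_right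

theorem Anticommute.of_commute_of_mul_nonneg {a b v : A} (hab : Anticommute a b) (hv : v * v = 1)
    (hvb : Commute v b) (hpos : 0 ≤ v * b) (hb : IsRightRegular b) : Anticommute a v := by
  have hsq : v * b * (v * b) = b * b := by
    rw [mul_assoc, ← mul_assoc b, ← hvb.eq, ← mul_assoc, ← mul_assoc, hv, one_mul]
  exact hab.of_commute_mul (commute_of_mul_self_eq hpos hsq (hab.commute_mul hab).symm).symm hb

end CStarAlgebra

section Operators

variable {R M : Type*} [Ring R] [AddCommGroup M] [Module R M] [TopologicalSpace M]

theorem ContinuousLinearMap.isLeftRegular_of_injective {T : M →L[R] M}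
    (hT : Function.Injective T) : IsLeftRegular T :=
  fun _ _ h => ContinuousLinearMap.ext fun x => hT (DFunLike.congr_fun h x)

variable [IsTopologicalAddGroup M]

theorem ContinuousLinearMap.injective_add_sub_one {P Q : M →L[R] M} (hP : IsIdempotentElem P)
    (hQ : IsIdempotentElem Q)
    (hPQ : LinearMap.range (P : M →ₗ[R] M) ⊓ LinearMap.ker (Q : M →ₗ[R] M) = ⊥)
    (hQP : LinearMap.ker (P : M →ₗ[R] M) ⊓ LinearMap.range (Q : M →ₗ[R] M) = ⊥) :
    Function.Injective ⇑(P + Q - 1 : M →L[R] M) := by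
  refine (injective_iff_map_eq_zero _).mpr fun x hx => ?_
  have hx : P x + Q x = x := sub_eq_zero.mp hx
  have hQPx : Q (P x) = 0 := by
    have h := congrArg Q hx
    rwa [map_add, show Q (Q x) = Q x from DFunLike.congr_fun hQ.eq x, add_eq_right] at h
  have hPQx : P (Q x) = 0 := by
    have h := congrArg P hx
    rwa [map_add, show P (P x) = P x from DFunLike.congr_fun hP.eq x, add_eq_left] at h
  have hPx : P x ∈ LinearMap.range (P : M →ₗ[R] M) ⊓ LinearMap.ker (Q : M →ₗ[R] M) :=
    ⟨LinearMap.mem_range_self (P : M →ₗ[R] M) x, hQPx⟩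
  have hQx : Q x ∈ LinearMap.ker (P : M →ₗ[R] M) ⊓ LinearMap.range (Q : M →ₗ[R] M) :=
    ⟨hPQx, LinearMap.mem_range_self (Q : M →ₗ[R] M) x⟩
  rw [hPQ, Submodule.mem_bot] at hPx
  rw [hQP, Submodule.mem_bot] at hQx
  rw [← hx, hPx, hQx, add_zero]

end Operators

theorem IsSymmetry.mem_unitary {V : H →L[ℂ] H} (hV : IsSymmetry V) : V ∈ unitary (H →L[ℂ] H) :=
  Unitary.mem_iff.mpr ⟨by rw [hV.1.star_eq, hV.2], by rw [hV.1.star_eq, hV.2]⟩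

theorem isSymmetry_mul_ringInverse {N R : H →L[ℂ] H} (hN : IsSelfAdjoint N) (hR : R.IsPositive)
    (hNR : R * R = N * N) (hu : IsUnit R) : IsSymmetry (N * R⁻¹ʳ) := by
  have hRN : Commute R N :=
    commute_of_mul_self_eq ((nonneg_iff_isPositive R).mpr hR) hNR ((Commute.refl N).mul_left rfl)
  exact ⟨(hN.commute_iff hR.isSelfAdjoint.ringInverse).mp hRN.symm.ringInverse_right,
    mul_ringInverse_mul_self hu hRN.symm hNR⟩

theorem GenericPosition.isRightRegular_add_sub_one {P Q : H →L[ℂ] H} (h : GenericPosition P Q)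
    (hP : IsOrthogonalProjection P) (hQ : IsOrthogonalProjection Q) :
    IsRightRegular (P + Q - 1) :=
  ((hP.1.add hQ.1).sub (.one _)).star_eq ▸ (ContinuousLinearMap.isLeftRegular_of_injective
    (ContinuousLinearMap.injective_add_sub_one hP.2 hQ.2 h.2.1 h.2.2.1)).star

theorem GenericPosition.anticommute_sub_of_isSymmetry_of_isPositive {P Q V : H →L[ℂ] H}
    (h : GenericPosition P Q) (hP : IsOrthogonalProjection P) (hQ : IsOrthogonalProjection Q)
    (hV : IsSymmetry V) (hVc : Commute V (P + Q - 1)) (hVp : (V * (P + Q - 1)).IsPositive) :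
    Anticommute (P - Q) V :=
  (anticommute_sub_add_sub_one hP.2 hQ.2 hP.2 hQ.2 rfl).of_commute_of_mul_nonneg hV.2 hVc
    ((nonneg_iff_isPositive _).mpr hVp) (h.isRightRegular_add_sub_one hP hQ)

theorem cross_section_unitary_general (P₀ Q₀ P Q V₀ R : H →L[ℂ] H)
    (hP₀ : IsOrthogonalProjection P₀) (hQ₀ : IsOrthogonalProjection Q₀)
    (hP : IsOrthogonalProjection P) (hQ : IsOrthogonalProjection Q)
    (hgen₀ : GenericPosition P₀ Q₀)
    (hdiff : P₀ - Q₀ = P - Q)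
    (hV₀ : IsSymmetry V₀) (hV₀c : Commute V₀ (P₀ + Q₀ - 1))
    (hV₀p : (V₀ * (P₀ + Q₀ - 1)).IsPositive)
    (hinv : IsUnit (P₀ + Q - 1))
    (hR : R.IsPositive) (hR2 : R * R = (P₀ + Q - 1) * (P₀ + Q - 1)) :
    (P₀ + Q - 1) * Ring.inverse R * V₀ ∈ unitary (H →L[ℂ] H) ∧
    ((P₀ + Q - 1) * Ring.inverse R * V₀) * (P₀ - Q₀) =
      (P₀ - Q₀) * ((P₀ + Q - 1) * Ring.inverse R * V₀) ∧
    ((P₀ + Q - 1) * Ring.inverse R * V₀) * P₀ * star ((P₀ + Q - 1) * Ring.inverse R * V₀) = P ∧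
    ((P₀ + Q - 1) * Ring.inverse R * V₀) * Q₀ * star ((P₀ + Q - 1) * Ring.inverse R * V₀) = Q := by
  have hR₀ : 0 ≤ R := (nonneg_iff_isPositive R).mpr hR
  set S := (P₀ + Q - 1) * R⁻¹ʳ
  have hS : IsSymmetry S := isSymmetry_mul_ringInverse ((hP₀.1.add hQ.1).sub (.one _)) hR hR2
    (isUnit_mul_self_iff.mp (hR2 ▸ hinv.mul hinv))
  have hAS : Anticommute (P₀ - Q₀) S := (anticommute_sub_add_sub_one hP₀.2 hQ₀.2 hP.2 hQ.2 hdiff)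
    |>.mul_ringInverse_of_mul_self_eq hR₀ hR2
  have hSD : Anticommute S (P - P₀) := (anticommute_add_sub_one_sub hP₀.2 hQ₀.2 hP.2 hQ.2 hdiff)
    |>.symm.mul_ringInverse_of_mul_self_eq hR₀ hR2 |>.symm
  have hSN : Commute S (P₀ + Q - 1) :=
    ((Commute.refl _).mul_ringInverse_of_mul_self_eq hR₀ hR2).symm
  have hU : S * V₀ ∈ unitary (H →L[ℂ] H) := mul_mem hS.mem_unitary hV₀.mem_unitary
  have hUA : Commute (P₀ - Q₀) (S * V₀) := hAS.commute_mul
    (hgen₀.anticommute_sub_of_isSymmetry_of_isPositive hP₀ hQ₀ hV₀ hV₀c hV₀p)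
  have hUAU : S * V₀ * (P₀ - Q₀) * star (S * V₀) = P - Q := by
    rw [← hUA.eq, mul_assoc, Unitary.mul_star_self_of_mem hU, mul_one, hdiff]
  have hUBU : S * V₀ * (P₀ + Q₀ - 1) * star (S * V₀) = P + Q - 1 := by
    have hB₀ : P₀ + Q₀ - 1 = P₀ + Q - 1 - (P - P₀) := by
      rw [← sub_sub_cancel P₀ Q₀, hdiff]; abel
    rw [star_mul, hV₀.1.star_eq, hS.1.star_eq, show S * V₀ * (P₀ + Q₀ - 1) * (V₀ * S) =
      S * (V₀ * (P₀ + Q₀ - 1) * V₀) * S by simp only [mul_assoc], hV₀c.mul_mul_eq_self hV₀.2, hB₀,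
      mul_sub, sub_mul, hSN.mul_mul_eq_self hS.2, hSD.mul_mul_eq_neg hS.2]
    abel
  have := IsAddTorsionFree.of_isTorsionFree ℂ (H →L[ℂ] H)
  obtain ⟨hUP, hUQ⟩ :=
    map_eq_of_map_sub_eq_of_map_add_sub_one_eq (Unitary.conjStarAlgAut ℂ _ ⟨S * V₀, hU⟩) hUAU hUBU
  exact ⟨hU, hUA.eq.symm, hUP, hUQ⟩

/-- Local cross-section formula. Let `(P₀,Q₀)` and `(P,Q)` be generic pairs with
the same difference `A`, `V₀` the Davis symmetry of `(P₀,Q₀)`. If `P₀ + Q - 1` is invertible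
and `R` is the (positive, invertible) square root of `(P₀ + Q - 1)²`, then
`U = (P₀ + Q - 1) R⁻¹ V₀` is a unitary commuting with `A` that carries `(P₀,Q₀)` to `(P,Q)`. -/
theorem cross_section_unitary (P₀ Q₀ P Q V₀ R : H →L[ℂ] H)
    (hP₀ : IsOrthogonalProjection P₀) (hQ₀ : IsOrthogonalProjection Q₀)
    (hP : IsOrthogonalProjection P) (hQ : IsOrthogonalProjection Q)
    (hgen₀ : GenericPosition P₀ Q₀) (hgen : GenericPosition P Q)
    (hdiff : P₀ - Q₀ = P - Q)
    (hV₀ : IsSymmetry V₀) (hV₀c : Commute V₀ (P₀ + Q₀ - 1))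
    (hV₀p : (V₀ * (P₀ + Q₀ - 1)).IsPositive)
    (hinv : IsUnit (P₀ + Q - 1))
    (hR : R.IsPositive) (hR2 : R * R = (P₀ + Q - 1) * (P₀ + Q - 1)) :
    (P₀ + Q - 1) * Ring.inverse R * V₀ ∈ unitary (H →L[ℂ] H) ∧
    ((P₀ + Q - 1) * Ring.inverse R * V₀) * (P₀ - Q₀) =
      (P₀ - Q₀) * ((P₀ + Q - 1) * Ring.inverse R * V₀) ∧
    ((P₀ + Q - 1) * Ring.inverse R * V₀) * P₀ * star ((P₀ + Q - 1) * Ring.inverse R * V₀) = P ∧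
    ((P₀ + Q - 1) * Ring.inverse R * V₀) * Q₀ * star ((P₀ + Q - 1) * Ring.inverse R * V₀) = Q :=
  cross_section_unitary_general P₀ Q₀ P Q V₀ R hP₀ hQ₀ hP hQ hgen₀ hdiff hV₀ hV₀c hV₀p hinv hR hR2
end

section
/- Let (P, Q) and (P', Q') be pairs of orthogonal projections on H, both in generic position, with P - Q = P' - Q'. Then ‖P + Q‖ = ‖P' + Q'‖. -/
open ContinuousLinearMap

variable {H : Type*} [NormedAddCommGroup H] [InnerProductSpace ℂ H] [CompleteSpace H]

/-!
Put `a = P - Q` and `b = P + Q - 1`. Then `a² + b² = 1` and `ab = -ba`, so `‖b‖² = ‖1 - a²‖` is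
determined by `P - Q`, while `‖P + Q‖ = ‖1 + b‖ = 1 + max σ(b)`. It remains to see that
`max σ(b) = ‖b‖`. If `x` is an approximate eigenvector of `b` for `l` with `|l| < 1`, then `a x` is
one for `-l`, so `σ(b) ∩ (-1, 1)` is symmetric. The only obstruction left is `-1 ∈ σ(b)` with
`1 ∉ σ(b)`; but then `-1` is isolated in `σ(b)`, hence an eigenvalue, and its eigenvectors lie in
`ker P ∩ ker Q = 0`.
-/

lemma IsIdempotentElem.sub_mul_sub_add_add_sub_one_mul_add_sub_one {R : Type*} [Ring R] {p q : R}
    (hp : IsIdempotentElem p) (hq : IsIdempotentElem q) :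
    (p - q) * (p - q) + (p + q - 1) * (p + q - 1) = 1 := by
  noncomm_ring
  rw [hp.eq, hq.eq]
  abel

lemma IsIdempotentElem.sub_mul_add_sub_one_eq_neg_mul {R : Type*} [Ring R] {p q : R}
    (hp : IsIdempotentElem p) (hq : IsIdempotentElem q) :
    (p - q) * (p + q - 1) = -((p + q - 1) * (p - q)) := by
  noncomm_ring
  rw [hp.eq, hq.eq]
  abel

section CStarAlgebra

variable {A : Type*} [CStarAlgebra A]

lemma IsSelfAdjoint.exists_norm_eq_one_norm_sub_mul_le {b : A} (hb : IsSelfAdjoint b) {l : ℝ}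
    (hl : l ∈ spectrum ℝ b) {d : ℝ} (hd : 0 < d) :
    ∃ x : A, ‖x‖ = 1 ∧ ‖(b - algebraMap ℝ A l) * x‖ ≤ d := by
  set f : ℝ → ℝ := fun t ↦ max 0 (1 - |t - l| / d)
  have hf : Continuous f := by fun_prop
  have hf1 : ∀ t, ‖f t‖ ≤ 1 := fun t ↦ by
    rw [Real.norm_of_nonneg (le_max_left _ _)]
    exact max_le zero_le_one (by have := div_nonneg (abs_nonneg (t - l)) hd.le; linarith)
  have hsub : b - algebraMap ℝ A l = cfc (fun t ↦ t - l) b := by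
    rw [cfc_sub _ _ b, cfc_id' ℝ b, cfc_const l b]
  refine ⟨cfc f b, le_antisymm (norm_cfc_le zero_le_one fun t _ ↦ hf1 t) ?_, ?_⟩
  · simpa [f] using norm_apply_le_norm_cfc f b hl
  · rw [hsub, ← cfc_mul _ _ b]
    refine norm_cfc_le hd.le fun t _ ↦ ?_
    rw [norm_mul, Real.norm_eq_abs]
    rcases le_or_gt d |t - l| with h | h
    · have : f t = 0 := max_eq_left (by rw [sub_nonpos, one_le_div hd]; exact h)
      simp [this, hd.le]
    · calc |t - l| * ‖f t‖ ≤ |t - l| * 1 := by gcongr; exact hf1 t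
        _ ≤ d := by linarith

lemma sq_norm_le_sq_norm_mul_add_sq_norm_mul {a b : A} (ha : IsSelfAdjoint a) (hb : IsSelfAdjoint b)
    (hsq : a * a + b * b = 1) (x : A) : ‖x‖ ^ 2 ≤ ‖a * x‖ ^ 2 + ‖b * x‖ ^ 2 := by
  have hx : star x * x = star (a * x) * (a * x) + star (b * x) * (b * x) := by
    rw [star_mul, star_mul, ha.star_eq, hb.star_eq]
    calc star x * x = star x * (a * a + b * b) * x := by rw [hsq, mul_one]
      _ = star x * a * (a * x) + star x * b * (b * x) := by noncomm_ring
  simp only [sq, ← CStarRing.norm_star_mul_self (x := x), hx]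
  rw [← CStarRing.norm_star_mul_self (x := a * x), ← CStarRing.norm_star_mul_self (x := b * x)]
  exact norm_add_le _ _

lemma neg_mem_spectrum_of_mul_eq_neg_mul {a b : A} (ha : IsSelfAdjoint a) (hb : IsSelfAdjoint b)
    (hsq : a * a + b * b = 1) (hab : a * b = -(b * a)) {l : ℝ} (hl : l ∈ spectrum ℝ b)
    (hl1 : |l| < 1) : -l ∈ spectrum ℝ b := by
  by_contra h
  obtain ⟨u, hu⟩ := spectrum.notMem_iff.mp h
  set r : A := -↑u⁻¹
  have hr : r * (b + algebraMap ℝ A l) = 1 := by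
    rw [show b + algebraMap ℝ A l = -(algebraMap ℝ A (-l) - b) by simp, ← hu, neg_mul_neg,
      Units.inv_mul]
  have hbound : ∀ d > 0, 1 ≤ (‖r‖ * ‖a‖ * d) ^ 2 + (d + |l|) ^ 2 := fun d hd ↦ by
    obtain ⟨x, hx, hbx⟩ := hb.exists_norm_eq_one_norm_sub_mul_le hl hd
    -- `b + l` intertwines `a` with `-(b - l)`, and `b + l` has the left inverse `r`
    have hax : a * x = -(r * (a * ((b - algebraMap ℝ A l) * x))) := by
      calc a * x = r * ((b + algebraMap ℝ A l) * a) * x := by rw [← mul_assoc r, hr, one_mul]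
        _ = -(r * (a * ((b - algebraMap ℝ A l) * x))) := by
          rw [add_mul, show b * a = -(a * b) by rw [hab, neg_neg], Algebra.commutes]; noncomm_ring
    have hax' : ‖a * x‖ ≤ ‖r‖ * ‖a‖ * d := by
      rw [hax, norm_neg, mul_assoc]
      refine (norm_mul_le _ _).trans (by gcongr; exact (norm_mul_le _ _).trans (by gcongr))
    have hbx' : ‖b * x‖ ≤ d + |l| := by
      calc ‖b * x‖ = ‖(b - algebraMap ℝ A l) * x + l • x‖ := by
            rw [sub_mul, Algebra.smul_def]; abel_nf
        _ ≤ d + |l| := by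
          refine (norm_add_le _ _).trans (add_le_add hbx ?_)
          rw [norm_smul, hx, mul_one, Real.norm_eq_abs]
    calc (1 : ℝ) = ‖x‖ ^ 2 := by rw [hx, one_pow]
      _ ≤ ‖a * x‖ ^ 2 + ‖b * x‖ ^ 2 := sq_norm_le_sq_norm_mul_add_sq_norm_mul ha hb hsq x
      _ ≤ _ := by gcongr
  have hlim : Filter.Tendsto (fun d : ℝ ↦ (‖r‖ * ‖a‖ * d) ^ 2 + (d + |l|) ^ 2)
      (nhdsWithin 0 (Set.Ioi 0)) (nhds (l ^ 2)) := by
    have : Continuous (fun d : ℝ ↦ (‖r‖ * ‖a‖ * d) ^ 2 + (d + |l|) ^ 2) := by fun_prop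
    simpa using (this.tendsto 0).mono_left nhdsWithin_le_nhds
  have : 1 ≤ l ^ 2 := ge_of_tendsto hlim (eventually_nhdsWithin_of_forall hbound)
  nlinarith [sq_abs l, abs_nonneg l]

lemma IsSelfAdjoint.exists_ne_zero_sub_mul_eq_zero_of_isolated {b : A} (hb : IsSelfAdjoint b)
    {t c : ℝ} (ht : t ∈ spectrum ℝ b) (htc : t < c)
    (hgap : ∀ x ∈ spectrum ℝ b, x = t ∨ c ≤ x) :
    ∃ e : A, e ≠ 0 ∧ (b - algebraMap ℝ A t) * e = 0 := by
  set g : ℝ → ℝ := fun x ↦ max 0 (c - x)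
  refine ⟨cfc g b, fun h ↦ ?_, ?_⟩
  · have := norm_apply_le_norm_cfc g b ht
    rw [h, norm_zero, Real.norm_eq_abs] at this
    have : c - t ≤ 0 := (le_abs_self _).trans (by simpa [g, htc.le] using this)
    linarith
  · rw [show b - algebraMap ℝ A t = cfc (fun x ↦ x - t) b by
      rw [cfc_sub _ _ b, cfc_id' ℝ b, cfc_const t b], ← cfc_mul _ _ b, ← cfc_zero ℝ b]
    refine cfc_congr fun x hx ↦ ?_
    rcases hgap x hx with rfl | h
    · simp
    · simp [g, h]

lemma norm_one_add_of_norm_mem_spectrum [Nontrivial A] {b : A} (h : ‖b‖ ∈ spectrum ℝ b) :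
    ‖1 + b‖ = 1 + ‖b‖ := by
  refine le_antisymm ((norm_add_le _ _).trans_eq (by rw [norm_one])) ?_
  have h1 : ‖b‖ + 1 ∈ spectrum ℝ (algebraMap ℝ A 1 + b) := spectrum.add_mem_add_iff.mpr h
  have := spectrum.norm_le_norm_of_mem h1
  rwa [map_one, Real.norm_of_nonneg (by positivity), add_comm ‖b‖] at this

variable [PartialOrder A] [StarOrderedRing A]

lemma norm_le_one_of_mul_self_add_mul_self_eq_one {a b : A} (ha : IsSelfAdjoint a)
    (hb : IsSelfAdjoint b) (hsq : a * a + b * b = 1) : ‖b‖ ≤ 1 := by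
  have hb2 : 0 ≤ b * b := by simpa [hb.star_eq] using star_mul_self_nonneg b
  have ha2 : 0 ≤ a * a := by simpa [ha.star_eq] using star_mul_self_nonneg a
  have : ‖b * b‖ ≤ 1 := by
    rw [CStarAlgebra.norm_le_one_iff_of_nonneg _ hb2, eq_sub_of_add_eq' hsq]
    exact sub_le_self 1 ha2
  rw [hb.norm_mul_self] at this
  nlinarith [norm_nonneg b]

lemma norm_mem_spectrum_of_mul_eq_neg_mul [Nontrivial A] {a b : A} (ha : IsSelfAdjoint a)
    (hb : IsSelfAdjoint b) (hsq : a * a + b * b = 1) (hab : a * b = -(b * a))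
    (hker : ∀ e : A, (b + 1) * e = 0 → e = 0) : ‖b‖ ∈ spectrum ℝ b := by
  have hb1 : ‖b‖ ≤ 1 := norm_le_one_of_mul_self_add_mul_self_eq_one ha hb hsq
  have hspec : ∀ x ∈ spectrum ℝ b, -1 ≤ x ∧ x ≤ 1 := fun x hx ↦
    abs_le.mp ((Real.norm_eq_abs x ▸ spectrum.norm_le_norm_of_mem hx).trans hb1)
  rcases CStarAlgebra.norm_or_neg_norm_mem_spectrum hb with h | h
  · exact h
  rcases hb1.lt_or_eq with hlt | heq
  · simpa using neg_mem_spectrum_of_mul_eq_neg_mul ha hb hsq hab h (by simpa using hlt)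
  rw [heq] at h ⊢
  by_contra h1
  -- otherwise `-1` is an isolated point of the spectrum, hence an eigenvalue
  have hcpt := spectrum.isCompact (𝕜 := ℝ) b
  set s := sSup (spectrum ℝ b)
  have hs : s ∈ spectrum ℝ b := hcpt.sSup_mem ⟨_, h⟩
  have hs1 : s < 1 := (hspec s hs).2.lt_of_ne fun h' ↦ h1 (h' ▸ hs)
  have hgap : ∀ x ∈ spectrum ℝ b, x = -1 ∨ -s ≤ x := fun x hx ↦ by
    rcases (hspec x hx).1.eq_or_lt with h' | h'
    · exact .inl h'.symm
    · have hx1 : |x| < 1 := abs_lt.mpr ⟨h', (le_csSup hcpt.bddAbove hx).trans_lt hs1⟩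
      have := le_csSup hcpt.bddAbove (neg_mem_spectrum_of_mul_eq_neg_mul ha hb hsq hab hx hx1)
      exact .inr (by linarith)
  obtain ⟨e, he, hbe⟩ := hb.exists_ne_zero_sub_mul_eq_zero_of_isolated h (by linarith) hgap
  exact he (hker e (by simpa using hbe))

lemma IsStarProjection.mul_eq_zero_of_add_mul_eq_zero {p q e : A} (hp : IsStarProjection p)
    (hq : IsStarProjection q) (h : (p + q) * e = 0) : p * e = 0 ∧ q * e = 0 := by
  have hsum : star (p * e) * (p * e) + star (q * e) * (q * e) = 0 := by
    rw [star_mul, star_mul, hp.isSelfAdjoint.star_eq, hq.isSelfAdjoint.star_eq]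
    calc star e * p * (p * e) + star e * q * (q * e) = star e * ((p * p + q * q) * e) := by
          noncomm_ring
      _ = 0 := by rw [hp.isIdempotentElem.eq, hq.isIdempotentElem.eq, h, mul_zero]
  have hp0 := star_mul_self_nonneg (p * e)
  have hq0 := star_mul_self_nonneg (q * e)
  constructor
  · exact CStarRing.star_mul_self_eq_zero_iff _ |>.mp <|
      le_antisymm (hsum ▸ le_add_of_nonneg_right hq0) hp0
  · exact CStarRing.star_mul_self_eq_zero_iff _ |>.mp <|
      le_antisymm (hsum ▸ le_add_of_nonneg_left hp0) hq0

lemma IsStarProjection.norm_add_eq [Nontrivial A] {p q : A} (hp : IsStarProjection p)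
    (hq : IsStarProjection q) (hker : ∀ e : A, p * e = 0 → q * e = 0 → e = 0) :
    ‖p + q‖ = 1 + √‖1 - (p - q) * (p - q)‖ := by
  have ha : IsSelfAdjoint (p - q) := hp.isSelfAdjoint.sub hq.isSelfAdjoint
  have hb : IsSelfAdjoint (p + q - 1) := (hp.isSelfAdjoint.add hq.isSelfAdjoint).sub (.one _)
  have hsq := hp.isIdempotentElem.sub_mul_sub_add_add_sub_one_mul_add_sub_one hq.isIdempotentElem
  have hmem : ‖p + q - 1‖ ∈ spectrum ℝ (p + q - 1) :=
    norm_mem_spectrum_of_mul_eq_neg_mul ha hb hsq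
      (hp.isIdempotentElem.sub_mul_add_sub_one_eq_neg_mul hq.isIdempotentElem) fun e he ↦
      (hp.mul_eq_zero_of_add_mul_eq_zero hq (by simpa using he)).elim (hker e)
  rw [← eq_sub_of_add_eq' hsq, hb.norm_mul_self, Real.sqrt_sq (norm_nonneg _),
    ← norm_one_add_of_norm_mem_spectrum hmem, add_sub_cancel]

end CStarAlgebra

lemma IsOrthogonalProjection.isStarProjection {P : H →L[ℂ] H} (hP : IsOrthogonalProjection P) :
    IsStarProjection P :=
  ⟨hP.2, hP.1⟩

lemma ContinuousLinearMap.eq_zero_of_mul_eq_zero_of_ker_inf_ker_eq_bot {R M : Type*} [Semiring R]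
    [TopologicalSpace M] [AddCommMonoid M] [Module R M] {P Q E : M →L[R] M}
    (hker : LinearMap.ker (P : M →ₗ[R] M) ⊓ LinearMap.ker (Q : M →ₗ[R] M) = ⊥)
    (hP : P * E = 0) (hQ : Q * E = 0) : E = 0 := by
  ext x
  have : E x ∈ LinearMap.ker (P : M →ₗ[R] M) ⊓ LinearMap.ker (Q : M →ₗ[R] M) :=
    ⟨congr($hP x), congr($hQ x)⟩
  simpa [hker] using this

/-- For two pairs of projections in generic position with the same difference,
the norms of the sums coincide. -/
theorem norm_sum_invariant (P Q P' Q' : H →L[ℂ] H)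
    (hP : IsOrthogonalProjection P) (hQ : IsOrthogonalProjection Q)
    (hP' : IsOrthogonalProjection P') (hQ' : IsOrthogonalProjection Q')
    (hgen : GenericPosition P Q) (hgen' : GenericPosition P' Q')
    (hdiff : P - Q = P' - Q') :
    ‖P + Q‖ = ‖P' + Q'‖ := by
  rcases subsingleton_or_nontrivial (H →L[ℂ] H) with _ | _
  · exact congrArg norm (Subsingleton.elim _ _)
  rw [hP.isStarProjection.norm_add_eq hQ.isStarProjection
      fun _ ↦ eq_zero_of_mul_eq_zero_of_ker_inf_ker_eq_bot hgen.2.2.2,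
    hP'.isStarProjection.norm_add_eq hQ'.isStarProjection
      fun _ ↦ eq_zero_of_mul_eq_zero_of_ker_inf_ker_eq_bot hgen'.2.2.2, hdiff]
end

section
/- Let L be a complex Hilbert space and let C, S ∈ B(L) be commuting, positive, injective selfadjoint operators with C² + S² = 1. On H = L ⊕ L let P₀ = [[1, 0], [0, 0]] and Q₀ = [[C², CS], [CS, S²]] (which are orthogonal projections). Then a unitary W ∈ B(H) commutes with both P₀ and Q₀ if and only if W = [[W', 0], [0, W']] for some unitary W' ∈ B(L) commuting with C and S. -/
open ContinuousLinearMap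

variable {L : Type*} [NormedAddCommGroup L] [InnerProductSpace ℂ L] [CompleteSpace L]

/-- The block operator `[[X, Y], [Z, W]]` on the Hilbert-space direct sum `L ⊕ L`
(realized as `WithLp 2 (L × L)`), acting by `(ξ, η) ↦ (Xξ + Yη, Zξ + Wη)`. -/
noncomputable def blockOp (X Y Z W : L →L[ℂ] L) :
    WithLp 2 (L × L) →L[ℂ] WithLp 2 (L × L) :=
  (WithLp.prodContinuousLinearEquiv 2 ℂ L L).symm.toContinuousLinearMap ∘L
    (((X.coprod Y).prod (Z.coprod W)) ∘L
      (WithLp.prodContinuousLinearEquiv 2 ℂ L L).toContinuousLinearMap)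

/-!
Commuting with `P₀` forces `W = [[A, 0], [0, E]]` with `A`, `E` unitary. Commuting with `Q₀` then
says that `A` commutes with `C²`, hence with `S² = 1 - C²`, and that `A (CS) = (CS) E`. As the
positive square roots of `C²` and `S²`, `C` and `S` lie in the closed algebra generated by them, so
`A` commutes with `C` and `S`; thus `(CS) A = A (CS) = (CS) E` and injectivity of `CS` gives `A = E`.
-/

theorem Commute.of_mul_self_right {A : Type*} [NonUnitalCStarAlgebra A] [PartialOrder A]
    [StarOrderedRing A] {a b : A} (ha : 0 ≤ a) (h : Commute b (a * a)) : Commute b a := by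
  have := (h.symm.cfcₙ_nnreal NNReal.sqrt).symm
  rwa [← CFC.sqrt, CFC.sqrt_mul_self a ha] at this

omit [CompleteSpace L] in
@[simp]
lemma blockOp_apply_fst (X Y Z W : L →L[ℂ] L) (v : WithLp 2 (L × L)) :
    (blockOp X Y Z W v).fst = X v.fst + Y v.snd := rfl

omit [CompleteSpace L] in
@[simp]
lemma blockOp_apply_snd (X Y Z W : L →L[ℂ] L) (v : WithLp 2 (L × L)) :
    (blockOp X Y Z W v).snd = Z v.fst + W v.snd := rfl

omit [CompleteSpace L] in
lemma ext_withLp_prod {T T' : WithLp 2 (L × L) →L[ℂ] WithLp 2 (L × L)}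
    (h : ∀ v, (T v).fst = (T' v).fst ∧ (T v).snd = (T' v).snd) : T = T' := by
  ext v
  exact congrArg (WithLp.toLp 2) (Prod.ext (h v).1 (h v).2)

omit [CompleteSpace L] in
lemma blockOp_inj {X Y Z W X' Y' Z' W' : L →L[ℂ] L} :
    blockOp X Y Z W = blockOp X' Y' Z' W' ↔ X = X' ∧ Y = Y' ∧ Z = Z' ∧ W = W' := by
  refine ⟨fun h ↦ ?_, by rintro ⟨rfl, rfl, rfl, rfl⟩; rfl⟩
  have h₁ ξ := congrArg (fun T ↦ T (WithLp.toLp 2 (ξ, 0))) h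
  have h₂ ξ := congrArg (fun T ↦ T (WithLp.toLp 2 (0, ξ))) h
  refine ⟨?_, ?_, ?_, ?_⟩ <;> ext ξ
  · simpa using congrArg WithLp.fst (h₁ ξ)
  · simpa using congrArg WithLp.fst (h₂ ξ)
  · simpa using congrArg WithLp.snd (h₁ ξ)
  · simpa using congrArg WithLp.snd (h₂ ξ)

omit [CompleteSpace L] in
lemma exists_blockOp (T : WithLp 2 (L × L) →L[ℂ] WithLp 2 (L × L)) :
    ∃ X Y Z W : L →L[ℂ] L, T = blockOp X Y Z W := by
  let e := (WithLp.prodContinuousLinearEquiv 2 ℂ L L).toContinuousLinearMap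
  let e' := (WithLp.prodContinuousLinearEquiv 2 ℂ L L).symm.toContinuousLinearMap
  refine ⟨fst ℂ L L ∘L e ∘L T ∘L e' ∘L inl ℂ L L, fst ℂ L L ∘L e ∘L T ∘L e' ∘L inr ℂ L L,
    snd ℂ L L ∘L e ∘L T ∘L e' ∘L inl ℂ L L, snd ℂ L L ∘L e ∘L T ∘L e' ∘L inr ℂ L L,
    ext_withLp_prod fun v ↦ ?_⟩
  have hv : v = WithLp.toLp 2 (v.fst, 0) + WithLp.toLp 2 (0, v.snd) := by
    rw [← WithLp.toLp_add, Prod.mk_add_mk, add_zero, zero_add]; rfl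
  constructor <;>
  · conv_lhs => rw [hv, map_add]
    rfl

omit [CompleteSpace L] in
lemma blockOp_mul (X Y Z W X' Y' Z' W' : L →L[ℂ] L) :
    blockOp X Y Z W * blockOp X' Y' Z' W' =
      blockOp (X * X' + Y * Z') (X * Y' + Y * W') (Z * X' + W * Z') (Z * Y' + W * W') :=
  ext_withLp_prod fun v ↦ by constructor <;> simp <;> abel

omit [CompleteSpace L] in
lemma blockOp_one_zero_zero_one : (blockOp 1 0 0 1 : WithLp 2 (L × L) →L[ℂ] _) = 1 :=
  ext_withLp_prod fun v ↦ by simp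

lemma star_blockOp (X Y Z W : L →L[ℂ] L) :
    star (blockOp X Y Z W) = blockOp (star X) (star Z) (star Y) (star W) := by
  simp only [star_eq_adjoint]
  refine ((eq_adjoint_iff _ _).2 fun x y ↦ ?_).symm
  simp [WithLp.prod_inner_apply, inner_add_left, inner_add_right, adjoint_inner_left]
  ring

omit [CompleteSpace L] in
lemma commute_blockOp_one_zero_zero_zero_iff {X Y Z W : L →L[ℂ] L} :
    Commute (blockOp X Y Z W) (blockOp 1 0 0 0) ↔ Y = 0 ∧ Z = 0 := by
  simp [Commute, SemiconjBy, blockOp_mul, blockOp_inj, eq_comm (a := (0 : L →L[ℂ] L))]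

omit [CompleteSpace L] in
lemma commute_blockOp_diag_iff {A E X Y Z W : L →L[ℂ] L} :
    Commute (blockOp A 0 0 E) (blockOp X Y Z W) ↔
      Commute A X ∧ A * Y = Y * E ∧ E * Z = Z * A ∧ Commute E W := by
  simp [Commute, SemiconjBy, blockOp_mul, blockOp_inj]

lemma blockOp_diag_mem_unitary_iff {A E : L →L[ℂ] L} :
    blockOp A 0 0 E ∈ unitary (WithLp 2 (L × L) →L[ℂ] _) ↔
      A ∈ unitary (L →L[ℂ] L) ∧ E ∈ unitary (L →L[ℂ] L) := by
  simp only [Unitary.mem_iff, star_blockOp, star_zero, blockOp_mul, ← blockOp_one_zero_zero_one,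
    blockOp_inj, mul_zero, zero_mul, add_zero, zero_add, true_and]
  tauto

lemma commute_and_eq_of_commute_blockOp_diag {C S A E : L →L[ℂ] L} (hC : 0 ≤ C) (hS : 0 ≤ S)
    (hCS : Function.Injective (C * S)) (hone : C * C + S * S = 1)
    (h : Commute (blockOp A 0 0 E) (blockOp (C * C) (C * S) (C * S) (S * S))) :
    Commute A C ∧ Commute A S ∧ A = E := by
  obtain ⟨hACC, hACS, -, -⟩ := commute_blockOp_diag_iff.1 h
  have hASS : Commute A (S * S) := by
    rw [eq_sub_of_add_eq' hone]
    exact (Commute.one_right A).sub_right hACC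
  have hAC := hACC.of_mul_self_right hC
  have hAS := hASS.of_mul_self_right hS
  have hCSA : C * S * A = C * S * E := (hAC.mul_right hAS).eq.symm.trans hACS
  exact ⟨hAC, hAS, ext fun ξ ↦ hCS (DFunLike.congr_fun hCSA ξ)⟩

theorem isotropy_unitaries_general (C S : L →L[ℂ] L)
    (hC : C.IsPositive) (hS : S.IsPositive)
    (hCinj : Function.Injective ⇑C) (hSinj : Function.Injective ⇑S)
    (hone : C * C + S * S = 1)
    (W : WithLp 2 (L × L) →L[ℂ] WithLp 2 (L × L))
    (hW : W ∈ unitary (WithLp 2 (L × L) →L[ℂ] WithLp 2 (L × L))) :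
    (Commute W (blockOp 1 0 0 0) ∧
        Commute W (blockOp (C * C) (C * S) (C * S) (S * S))) ↔
      ∃ W' : L →L[ℂ] L, W' ∈ unitary (L →L[ℂ] L) ∧
        Commute W' C ∧ Commute W' S ∧ W = blockOp W' 0 0 W' := by
  constructor
  · rintro ⟨hP, hQ⟩
    obtain ⟨A, B, D, E, rfl⟩ := exists_blockOp W
    obtain ⟨rfl, rfl⟩ := commute_blockOp_one_zero_zero_zero_iff.1 hP
    obtain ⟨hAC, hAS, rfl⟩ := commute_and_eq_of_commute_blockOp_diag
      ((nonneg_iff_isPositive C).2 hC) ((nonneg_iff_isPositive S).2 hS)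
      (hCinj.comp hSinj) hone hQ
    exact ⟨A, (blockOp_diag_mem_unitary_iff.1 hW).1, hAC, hAS, rfl⟩
  · rintro ⟨W', -, hW'C, hW'S, rfl⟩
    exact ⟨commute_blockOp_one_zero_zero_zero_iff.2 ⟨rfl, rfl⟩,
      commute_blockOp_diag_iff.2 ⟨hW'C.mul_right hW'C, (hW'C.mul_right hW'S).eq,
        (hW'C.mul_right hW'S).eq, hW'S.mul_right hW'S⟩⟩

/-- the isotropy group: a unitary `W` on `L ⊕ L` commutes with both
`P₀ = [[1,0],[0,0]]` and `Q₀ = [[C², CS],[CS, S²]]` iff `W = [[W', 0],[0, W']]` for a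
unitary `W'` of `L` commuting with `C` and `S`. -/
theorem isotropy_unitaries (C S : L →L[ℂ] L)
    (hC : C.IsPositive) (hS : S.IsPositive)
    (hCinj : Function.Injective ⇑C) (hSinj : Function.Injective ⇑S)
    (hCS : Commute C S) (hone : C * C + S * S = 1)
    (W : WithLp 2 (L × L) →L[ℂ] WithLp 2 (L × L))
    (hW : W ∈ unitary (WithLp 2 (L × L) →L[ℂ] WithLp 2 (L × L))) :
    (Commute W (blockOp 1 0 0 0) ∧
        Commute W (blockOp (C * C) (C * S) (C * S) (S * S))) ↔
      ∃ W' : L →L[ℂ] L, W' ∈ unitary (L →L[ℂ] L) ∧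
        Commute W' C ∧ Commute W' S ∧ W = blockOp W' 0 0 W' :=
  isotropy_unitaries_general C S hC hS hCinj hSinj hone W hW
end
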